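/- arXiv:1802.03386 — 5 statements merged into one kernel-verified Lean document; each statement's English description precedes it below -/
import Mathlib

section
/- Mixture fixed-point property for minority arms: suppose q ∈ Δ_K satisfies q = Σ_{e∈E} W(e)·ξ^e + Σ_{s∈S} W(s)·T^k_s q, where each ξ^e ∈ Δ_K, W is a probability weighting over E ∪ S, and ζ = (Σ_{e∈E} W(e)·ξ^e)/(Σ_{e∈E} W(e)). Then for every minority arm i > k, q(i) ≤ ζ(i), and for every majority arm i ≤ k, q(i) ≥ ζ(i). -/
/-! Truncation only lowers minority coordinates and only raises majority ones. In the
fixed-point equation `q i = (∑ WE) ζ i + ∑ WS s * T_s q i` the truncated terms therefore lie on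
one side of `q i`, and since they carry total weight `1 - ∑ WE`, `q i` lies on the same side
of `ζ i`. -/

open Finset

/-- The truncation operator `T^k_s` (arms are 0-indexed: majority arms are `i < k`,
minority arms are `i ≥ k`). -/
noncomputable def trunc (K k : ℕ) (s : ℝ) (q : Fin K → ℝ) : Fin K → ℝ := fun i =>
  if k ≤ (i : ℕ) then (if q i ≤ s then 0 else q i)
  else q i * (1 + (∑ j : Fin K, if k ≤ (j : ℕ) ∧ q j ≤ s then q j else 0) /
      (∑ j : Fin K, if (j : ℕ) < k then q j else 0))

section Truncation

variable {K k : ℕ} {s : ℝ} {q : Fin K → ℝ}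

theorem trunc_le_self (hq : ∀ j, 0 ≤ q j) {i : Fin K} (hi : k ≤ (i : ℕ)) :
    trunc K k s q i ≤ q i := by
  simp only [trunc, if_pos hi]
  split_ifs
  exacts [hq i, le_rfl]

theorem self_le_trunc (hq : ∀ j, 0 ≤ q j) {i : Fin K} (hi : (i : ℕ) < k) :
    q i ≤ trunc K k s q i := by
  simp only [trunc, if_neg (Nat.not_le.mpr hi)]
  have hmoved : 0 ≤ ∑ j : Fin K, if k ≤ (j : ℕ) ∧ q j ≤ s then q j else 0 :=
    sum_nonneg fun j _ => by split_ifs <;> simp [hq j]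
  have hmaj : 0 ≤ ∑ j : Fin K, if (j : ℕ) < k then q j else 0 :=
    sum_nonneg fun j _ => by split_ifs <;> simp [hq j]
  exact le_mul_of_one_le_right (hq i) (le_add_of_nonneg_right (div_nonneg hmoved hmaj))

end Truncation

section FixedPoint

variable {ι : Type*} (S : Finset ι) {w t : ι → ℝ} {x a c : ℝ}

theorem le_div_of_eq_add_sum_mul_le (hc : 0 < c) (hw1 : c + ∑ s ∈ S, w s = 1)
    (hw : ∀ s ∈ S, 0 ≤ w s) (ht : ∀ s ∈ S, t s ≤ x) (hx : x = a + ∑ s ∈ S, w s * t s) :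
    x ≤ a / c := by
  have hmix : ∑ s ∈ S, w s * t s ≤ (∑ s ∈ S, w s) * x := by
    rw [sum_mul]
    exact sum_le_sum fun s hs => mul_le_mul_of_nonneg_left (ht s hs) (hw s hs)
  rw [eq_sub_of_add_eq' hw1] at hmix
  rw [le_div_iff₀ hc]
  linarith

theorem div_le_of_eq_add_sum_mul_ge (hc : 0 < c) (hw1 : c + ∑ s ∈ S, w s = 1)
    (hw : ∀ s ∈ S, 0 ≤ w s) (ht : ∀ s ∈ S, x ≤ t s) (hx : x = a + ∑ s ∈ S, w s * t s) :
    a / c ≤ x := by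
  have hmix : (∑ s ∈ S, w s) * x ≤ ∑ s ∈ S, w s * t s := by
    rw [sum_mul]
    exact sum_le_sum fun s hs => mul_le_mul_of_nonneg_left (ht s hs) (hw s hs)
  rw [eq_sub_of_add_eq' hw1] at hmix
  rw [div_le_iff₀ hc]
  linarith

end FixedPoint

theorem fixed_point_majority_minority_general (K k : ℕ) {E : Type*} [Fintype E]
    (S : Finset ℝ)
    (WE : E → ℝ) (WS : ℝ → ℝ) (ξ : E → Fin K → ℝ) (ζ q : Fin K → ℝ)
    (hWS0 : ∀ s ∈ S, 0 ≤ WS s)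
    (hW1 : (∑ e, WE e) + ∑ s ∈ S, WS s = 1)
    (hWEpos : 0 < ∑ e, WE e)
    (hζ : ∀ i, ζ i = (∑ e, WE e * ξ e i) / ∑ e, WE e)
    (hq0 : ∀ i, 0 ≤ q i)
    (hfix : ∀ i, q i = (∑ e, WE e * ξ e i) + ∑ s ∈ S, WS s * trunc K k s q i) :
    ∀ i : Fin K, (k ≤ (i : ℕ) → q i ≤ ζ i) ∧ ((i : ℕ) < k → ζ i ≤ q i) := by
  intro i
  rw [hζ i]
  exact ⟨fun hi => le_div_of_eq_add_sum_mul_le S hWEpos hW1 hWS0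
      (fun _ _ => trunc_le_self hq0 hi) (hfix i),
    fun hi => div_le_of_eq_add_sum_mul_ge S hWEpos hW1 hWS0
      (fun _ _ => self_le_trunc hq0 hi) (hfix i)⟩

/-- mixture fixed-point property. If `q` is the `W`-mixture of the expert
advices `ξ^e` (`e ∈ E`) and the auxiliary truncated experts `T^k_s q` (`s ∈ S`), then
minority coordinates of `q` are below those of `ζ` and majority coordinates are above. -/
theorem fixed_point_majority_minority (K k : ℕ) {E : Type*} [Fintype E]
    (S : Finset ℝ) (hS : ∀ s ∈ S, s ∈ Set.Ioc (0 : ℝ) (1 / 2))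
    (WE : E → ℝ) (WS : ℝ → ℝ) (ξ : E → Fin K → ℝ) (ζ q : Fin K → ℝ)
    (hK : 1 ≤ K) (hk1 : 1 ≤ k) (hkK : k ≤ K)
    (hWE0 : ∀ e, 0 ≤ WE e) (hWS0 : ∀ s ∈ S, 0 ≤ WS s)
    (hW1 : (∑ e, WE e) + ∑ s ∈ S, WS s = 1)
    (hWEpos : 0 < ∑ e, WE e)
    (hξ0 : ∀ e i, 0 ≤ ξ e i) (hξ1 : ∀ e, ∑ i, ξ e i = 1)
    (hζ : ∀ i, ζ i = (∑ e, WE e * ξ e i) / ∑ e, WE e)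
    (hq0 : ∀ i, 0 ≤ q i) (hq1 : ∑ i, q i = 1)
    (hqmaj : 0 < ∑ j : Fin K, if (j : ℕ) < k then q j else 0)
    (hζmaj : 0 < ∑ j : Fin K, if (j : ℕ) < k then ζ j else 0)
    (hfix : ∀ i, q i = (∑ e, WE e * ξ e i) + ∑ s ∈ S, WS s * trunc K k s q i) :
    ∀ i : Fin K, (k ≤ (i : ℕ) → q i ≤ ζ i) ∧ ((i : ℕ) < k → ζ i ≤ q i) :=
  fixed_point_majority_minority_general K k S WE WS ξ ζ q hWS0 hW1 hWEpos hζ hq0 hfix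
end

section
/- Majority-ratio identity for the auxiliary experts: under the fixed-point equation q = Σ_{e∈E} W(e)ξ^e + Σ_{s∈S} W(s)T^k_s q, for every s ∈ S and every i ≤ k one has (T^k_s q)(i) = (ζ(i)/Σ_{j≤k} ζ(j)) · (1 − Σ_{j>k} (T^k_s q)(j)), where ζ is the normalized E-average of the ξ^e. -/
open Finset

section Truncation

variable {K : ℕ} (k : ℕ)

def majoritySum (v : Fin K → ℝ) : ℝ :=
  ∑ j : Fin K, if (j : ℕ) < k then v j else 0

def minoritySum (v : Fin K → ℝ) : ℝ :=
  ∑ j : Fin K, if k ≤ (j : ℕ) then v j else 0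

noncomputable def majorityScale (s : ℝ) (q : Fin K → ℝ) : ℝ :=
  1 + (∑ j : Fin K, if k ≤ (j : ℕ) ∧ q j ≤ s then q j else 0) / majoritySum k q

variable {k}

theorem majoritySum_mul_of_mul_eq {q a : Fin K → ℝ} {d : ℝ}
    (h : ∀ i : Fin K, (i : ℕ) < k → q i * d = a i) :
    majoritySum k q * d = majoritySum k a := by
  rw [majoritySum, majoritySum, sum_mul]
  refine sum_congr rfl fun j _ => ?_
  split_ifs with hj
  · exact h j hj
  · exact zero_mul d

theorem div_majoritySum_eq_of_mul_eq {q a : Fin K → ℝ} {d : ℝ}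
    (h : ∀ i : Fin K, (i : ℕ) < k → q i * d = a i) (hd : d ≠ 0) {i : Fin K} (hi : (i : ℕ) < k) :
    q i / majoritySum k q = a i / majoritySum k a := by
  rw [← h i hi, ← majoritySum_mul_of_mul_eq h, mul_div_mul_right _ _ hd]

theorem majoritySum_add_minoritySum (v : Fin K → ℝ) :
    majoritySum k v + minoritySum k v = ∑ i, v i := by
  rw [majoritySum, minoritySum, ← sum_add_distrib]
  refine sum_congr rfl fun j _ => ?_
  by_cases hj : (j : ℕ) < k
  · simp [hj, Nat.not_le.mpr hj]
  · simp [hj, Nat.le_of_not_lt hj]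

theorem trunc_of_lt {s : ℝ} {q : Fin K → ℝ} {i : Fin K} (hi : (i : ℕ) < k) :
    trunc K k s q i = q i * majorityScale k s q := by
  simp only [trunc, majorityScale, majoritySum, if_neg (Nat.not_le.mpr hi)]

theorem majoritySum_trunc (s : ℝ) (q : Fin K → ℝ) :
    majoritySum k (trunc K k s q) = majoritySum k q * majorityScale k s q :=
  (majoritySum_mul_of_mul_eq fun _ hi => (trunc_of_lt hi).symm).symm

/-- Truncation moves the minority mass at most `s` onto the majority arms. -/
theorem sum_trunc (s : ℝ) {q : Fin K → ℝ} (hq : majoritySum k q ≠ 0) :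
    ∑ i, trunc K k s q i = ∑ i, q i := by
  have hsplit : ∀ j : Fin K, (if k ≤ (j : ℕ) then q j else 0) =
      (if k ≤ (j : ℕ) ∧ q j ≤ s then q j else 0) +
        if k ≤ (j : ℕ) then trunc K k s q j else 0 := by
    intro j
    by_cases hj : k ≤ (j : ℕ)
    · by_cases hs : q j ≤ s <;> simp [trunc, hj, hs]
    · simp [hj]
  rw [← majoritySum_add_minoritySum, ← majoritySum_add_minoritySum, majoritySum_trunc s q,
    minoritySum, minoritySum, majorityScale, sum_congr rfl fun j _ => hsplit j, sum_add_distrib]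
  field_simp
  ring

theorem trunc_eq_div_mul_majoritySum {s : ℝ} {q : Fin K → ℝ} (hq : majoritySum k q ≠ 0)
    {i : Fin K} (hi : (i : ℕ) < k) :
    trunc K k s q i = q i / majoritySum k q * majoritySum k (trunc K k s q) := by
  rw [trunc_of_lt hi, majoritySum_trunc s q]
  field_simp

theorem mul_one_sub_eq_of_fixedPoint {S : Finset ℝ} {w : ℝ → ℝ} {q a : Fin K → ℝ}
    (hfix : ∀ i, q i = a i + ∑ s ∈ S, w s * trunc K k s q i) (i : Fin K) (hi : (i : ℕ) < k) :
    q i * (1 - ∑ s ∈ S, w s * majorityScale k s q) = a i := by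
  have hsum : ∑ s ∈ S, w s * trunc K k s q i = q i * ∑ s ∈ S, w s * majorityScale k s q := by
    rw [mul_sum]
    exact sum_congr rfl fun s _ => by rw [trunc_of_lt hi]; ring
  linarith [hfix i]

end Truncation

theorem auxiliary_expert_majority_ratio_general (K k : ℕ) {E : Type*} [Fintype E]
    (S : Finset ℝ)
    (WE : E → ℝ) (WS : ℝ → ℝ) (ξ : E → Fin K → ℝ) (ζ q : Fin K → ℝ)
    (hWEpos : 0 < ∑ e, WE e)
    (hζ : ∀ i, ζ i = (∑ e, WE e * ξ e i) / ∑ e, WE e)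
    (hq1 : ∑ i, q i = 1)
    (hqmaj : 0 < ∑ j : Fin K, if (j : ℕ) < k then q j else 0)
    (hζmaj : 0 < ∑ j : Fin K, if (j : ℕ) < k then ζ j else 0)
    (hfix : ∀ i, q i = (∑ e, WE e * ξ e i) + ∑ s ∈ S, WS s * trunc K k s q i) :
    ∀ s ∈ S, ∀ i : Fin K, (i : ℕ) < k →
      trunc K k s q i =
        (ζ i / ∑ j : Fin K, if (j : ℕ) < k then ζ j else 0) *
          (1 - ∑ j : Fin K, if k ≤ (j : ℕ) then trunc K k s q j else 0) := by
  intro s _ i hi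
  set a : Fin K → ℝ := fun j => ∑ e, WE e * ξ e j
  set d := 1 - ∑ s ∈ S, WS s * majorityScale k s q
  have hζa : ∀ j : Fin K, (j : ℕ) < k → ζ j * ∑ e, WE e = a j := fun j _ => by
    rw [hζ j, div_mul_cancel₀ _ hWEpos.ne']
  have hqa : ∀ j : Fin K, (j : ℕ) < k → q j * d = a j := mul_one_sub_eq_of_fixedPoint hfix
  have ha : majoritySum k a ≠ 0 := by
    rw [← majoritySum_mul_of_mul_eq hζa]
    exact mul_ne_zero hζmaj.ne' hWEpos.ne'
  have hd : d ≠ 0 := fun h => ha (by rw [← majoritySum_mul_of_mul_eq hqa, h, mul_zero])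
  have hmass : majoritySum k (trunc K k s q) = 1 - minoritySum k (trunc K k s q) := by
    rw [← hq1, ← sum_trunc s hqmaj.ne', ← majoritySum_add_minoritySum, add_sub_cancel_right]
  change _ = ζ i / majoritySum k ζ * (1 - minoritySum k (trunc K k s q))
  rw [trunc_eq_div_mul_majoritySum hqmaj.ne' hi, hmass, div_majoritySum_eq_of_mul_eq hqa hd hi,
    div_majoritySum_eq_of_mul_eq hζa hWEpos.ne' hi]

/-- majority-ratio identity for the auxiliary experts under the
fixed-point equation. -/
theorem auxiliary_expert_majority_ratio (K k : ℕ) {E : Type*} [Fintype E]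
    (S : Finset ℝ) (hS : ∀ s ∈ S, s ∈ Set.Ioc (0 : ℝ) (1 / 2))
    (WE : E → ℝ) (WS : ℝ → ℝ) (ξ : E → Fin K → ℝ) (ζ q : Fin K → ℝ)
    (hK : 1 ≤ K) (hk1 : 1 ≤ k) (hkK : k ≤ K)
    (hWE0 : ∀ e, 0 ≤ WE e) (hWS0 : ∀ s ∈ S, 0 ≤ WS s)
    (hW1 : (∑ e, WE e) + ∑ s ∈ S, WS s = 1)
    (hWEpos : 0 < ∑ e, WE e)
    (hξ0 : ∀ e i, 0 ≤ ξ e i) (hξ1 : ∀ e, ∑ i, ξ e i = 1)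
    (hζ : ∀ i, ζ i = (∑ e, WE e * ξ e i) / ∑ e, WE e)
    (hq0 : ∀ i, 0 ≤ q i) (hq1 : ∑ i, q i = 1)
    (hqmaj : 0 < ∑ j : Fin K, if (j : ℕ) < k then q j else 0)
    (hζmaj : 0 < ∑ j : Fin K, if (j : ℕ) < k then ζ j else 0)
    (hfix : ∀ i, q i = (∑ e, WE e * ξ e i) + ∑ s ∈ S, WS s * trunc K k s q i) :
    ∀ s ∈ S, ∀ i : Fin K, (i : ℕ) < k →
      trunc K k s q i =
        (ζ i / ∑ j : Fin K, if (j : ℕ) < k then ζ j else 0) *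
          (1 - ∑ j : Fin K, if k ≤ (j : ℕ) then trunc K k s q j else 0) :=
  auxiliary_expert_majority_ratio_general K k S WE WS ξ ζ q hWEpos hζ hq1 hqmaj hζmaj hfix
end

section
/- Key lemma (2-armed case): Let T rounds be given with probability vectors q_t ∈ Δ_2 satisfying q_t(1) ≥ q_t(2), losses ℓ̄_t ∈ [0,1]^2 satisfying ℓ̄_t(2) = 0 whenever q_t(2) ≤ γ. Set M = Σ_t ℓ̄_t(1), m = Σ_t ℓ̄_t(2), and for s ∈ [γ, 1/2] let L^s = Σ_t ⟨T_s q_t, ℓ̄_t⟩ where T_s q = (1,0) if q(2) ≤ s and T_s q = q otherwise, and L = L^γ. If m − M > 0, then there exists s ∈ (γ, 1/2] such that m − M ≤ (L − L^s)/γ. -/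
/-
Off `S = {t | γ < x t}` the hypotheses force `l2 t = 0`, so `m - M ≤ A := ∑_{t ∈ S} (l2 t - l1 t)`,
while for `γ ≤ s` the difference `L γ - L s` is `∑_{t ∈ S, x t ≤ s} x t (l2 t - l1 t)`: only the
rounds whose play is truncated by `T_s` but not by `T_γ` change. So it suffices to find a threshold
`s ∈ (γ, 1/2]` with `γ A ≤ ∑_{t ∈ S, x t ≤ s} x t (l2 t - l1 t)`. This is proved by induction,
peeling off the rounds with the smallest value `x₀` of `x`: if the remaining total is nonpositive a
threshold below every `x t` works; otherwise `γ A ≤ x₀ A`, the peeled rounds contribute exactly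
`x₀` times their part of `A`, and the rest is the induction hypothesis with `γ` replaced by `x₀`.
-/

open Finset

-- `⟨T_s q, ℓ̄⟩` for `q = (1 - x, x)` and `ℓ̄ = (l₁, l₂)`.
noncomputable def thresholdLoss (s x l₁ l₂ : ℝ) : ℝ :=
  if x ≤ s then 1 * l₁ + 0 * l₂ else (1 - x) * l₁ + x * l₂

theorem thresholdLoss_sub_thresholdLoss {γ s : ℝ} (hγs : γ ≤ s) (x l₁ l₂ : ℝ) :
    thresholdLoss γ x l₁ l₂ - thresholdLoss s x l₁ l₂ =
      if γ < x ∧ x ≤ s then x * (l₂ - l₁) else 0 := by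
  by_cases hxγ : x ≤ γ
  · simp [thresholdLoss, hxγ, hxγ.trans hγs, not_lt.2 hxγ]
  by_cases hxs : x ≤ s
  · simp [thresholdLoss, hxγ, hxs, lt_of_not_ge hxγ]
    ring
  · simp [thresholdLoss, hxγ, hxs]

theorem sum_thresholdLoss_sub_sum_thresholdLoss {ι : Type*} {γ s : ℝ} (hγs : γ ≤ s)
    (S : Finset ι) (x l₁ l₂ : ι → ℝ) :
    ∑ t ∈ S, thresholdLoss γ (x t) (l₁ t) (l₂ t) - ∑ t ∈ S, thresholdLoss s (x t) (l₁ t) (l₂ t) =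
      ∑ t ∈ S with γ < x t ∧ x t ≤ s, x t * (l₂ t - l₁ t) := by
  rw [← sum_sub_distrib, sum_filter]
  exact sum_congr rfl fun t _ => thresholdLoss_sub_thresholdLoss hγs _ _ _

theorem sum_filter_le_eq_add_sum_filter_ne {ι α M : Type*} [LinearOrder α] [AddCommMonoid M]
    {x₀ v : α} (hv : x₀ ≤ v) (S : Finset ι) (x : ι → α) (f : ι → M) :
    ∑ t ∈ S with x t ≤ v, f t =
      ∑ t ∈ S with x t = x₀, f t + ∑ t ∈ (S.filter (x · ≠ x₀)).filter (x · ≤ v), f t := by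
  simp only [sum_filter, ← sum_add_distrib]
  refine sum_congr rfl fun t _ => ?_
  rcases eq_or_ne (x t) x₀ with h | h
  · simp [h, hv]
  · simp [h]

theorem exists_threshold_mul_sum_le {ι : Type*} (x a : ι → ℝ) {b c : ℝ} (S : Finset ι)
    (hc0 : 0 ≤ c) (hcb : c < b) (hS : ∀ t ∈ S, c < x t ∧ x t ≤ b) :
    ∃ v ∈ Set.Ioc c b, c * ∑ t ∈ S, a t ≤ ∑ t ∈ S with x t ≤ v, x t * a t := by
  induction S using Finset.strongInduction generalizing c with
  | _ S ih =>
  rcases S.eq_empty_or_nonempty with rfl | hne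
  · exact ⟨b, ⟨hcb, le_rfl⟩, by simp⟩
  obtain ⟨t₀, ht₀S, hx₀⟩ := S.exists_mem_eq_inf' hne x
  set x₀ := S.inf' hne x
  have hx₀_le : ∀ t ∈ S, x₀ ≤ x t := fun t ht => S.inf'_le x ht
  have hcx₀ : c < x₀ := hx₀ ▸ (hS t₀ ht₀S).1
  rcases le_or_gt (∑ t ∈ S, a t) 0 with hsum | hsum
  · refine ⟨(c + x₀) / 2, ⟨by linarith, by linarith [hx₀ ▸ (hS t₀ ht₀S).2]⟩, ?_⟩
    have hempty : ∑ t ∈ S with x t ≤ (c + x₀) / 2, x t * a t = 0 :=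
      sum_eq_zero fun t ht => by
        rw [mem_filter] at ht
        linarith [hx₀_le t ht.1]
    rw [hempty]
    exact mul_nonpos_of_nonneg_of_nonpos hc0 hsum
  rcases (hx₀ ▸ (hS t₀ ht₀S).2 : x₀ ≤ b).lt_or_eq with hx₀b | hx₀b
  · obtain ⟨v, ⟨hx₀v, hvb⟩, hv⟩ := ih (S.filter (x · ≠ x₀))
      (filter_ssubset.mpr ⟨t₀, ht₀S, by simp [hx₀]⟩) (hc0.trans hcx₀.le) hx₀b
      (fun t ht => by
        rw [mem_filter] at ht
        exact ⟨(hx₀_le t ht.1).lt_of_ne' ht.2, (hS t ht.1).2⟩)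
    refine ⟨v, ⟨hcx₀.trans hx₀v, hvb⟩, ?_⟩
    have hmin : ∑ t ∈ S with x t = x₀, x t * a t = x₀ * ∑ t ∈ S with x t = x₀, a t := by
      rw [mul_sum]
      exact sum_congr rfl fun t ht => by rw [(mem_filter.mp ht).2]
    calc c * ∑ t ∈ S, a t ≤ x₀ * ∑ t ∈ S, a t := by gcongr
      _ = x₀ * ∑ t ∈ S with x t = x₀, a t + x₀ * ∑ t ∈ S with x t ≠ x₀, a t := by
        rw [← mul_add, sum_filter_add_sum_filter_not]
      _ ≤ ∑ t ∈ S with x t = x₀, x t * a t +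
          ∑ t ∈ (S.filter (x · ≠ x₀)).filter (x · ≤ v), x t * a t := by
        rw [hmin]; gcongr
      _ = ∑ t ∈ S with x t ≤ v, x t * a t := (sum_filter_le_eq_add_sum_filter_ne hx₀v.le _ _ _).symm
  · refine ⟨b, ⟨hcb, le_rfl⟩, ?_⟩
    have hall : ∀ t ∈ S, x t = b := fun t ht => le_antisymm (hS t ht).2 (hx₀b ▸ hx₀_le t ht)
    have hsum_b : ∑ t ∈ S, x t * a t = b * ∑ t ∈ S, a t := by
      rw [mul_sum]
      exact sum_congr rfl fun t ht => by rw [hall t ht]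
    rw [filter_true_of_mem fun t ht => (hall t ht).le, hsum_b]
    gcongr

theorem two_arm_key_lemma_general (T : ℕ) (γ : ℝ)
    (hγ0 : 0 < γ)
    (x l1 l2 : ℕ → ℝ)
    (hx : ∀ t < T, x t ≤ 1 / 2)
    (hl1 : ∀ t < T, l1 t ∈ Set.Icc (0 : ℝ) 1)
    (hzero : ∀ t < T, x t ≤ γ → l2 t = 0)
    (M m : ℝ) (hM : M = ∑ t ∈ Finset.range T, l1 t) (hm : m = ∑ t ∈ Finset.range T, l2 t)
    (L : ℝ → ℝ)
    (hL : ∀ s, L s = ∑ t ∈ Finset.range T,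
      (if x t ≤ s then 1 * l1 t + 0 * l2 t else (1 - x t) * l1 t + x t * l2 t))
    (hpos : 0 < m - M) :
    ∃ s ∈ Set.Ioc γ (1 / 2 : ℝ), m - M ≤ (L γ - L s) / γ := by
  set S := (range T).filter (γ < x ·)
  have hgap : m - M ≤ ∑ t ∈ S, (l2 t - l1 t) := by
    rw [hm, hM, ← sum_sub_distrib]
    refine sum_le_sum_of_subset_of_nonpos' (filter_subset _ _) fun t ht htS => ?_
    rw [mem_range] at ht
    have hxγ : x t ≤ γ := not_lt.1 fun h => htS (mem_filter.2 ⟨mem_range.2 ht, h⟩)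
    linarith [hzero t ht hxγ, (hl1 t ht).1]
  obtain ⟨t, htS⟩ := nonempty_of_sum_ne_zero (hpos.trans_le hgap).ne'
  obtain ⟨ht, hγx⟩ := mem_filter.1 htS
  obtain ⟨v, hv, hγv⟩ := exists_threshold_mul_sum_le x (fun t => l2 t - l1 t) S hγ0.le
    (hγx.trans_le (hx t (mem_range.1 ht)))
    fun t ht => ⟨(mem_filter.1 ht).2, hx t (mem_range.1 (mem_filter.1 ht).1)⟩
  refine ⟨v, hv, (le_div_iff₀ hγ0).2 ?_⟩
  have hLdiff : L γ - L v = ∑ t ∈ S with x t ≤ v, x t * (l2 t - l1 t) := by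
    rw [hL, hL, filter_filter]
    exact sum_thresholdLoss_sub_sum_thresholdLoss hv.1.le _ x l1 l2
  calc (m - M) * γ ≤ γ * ∑ t ∈ S, (l2 t - l1 t) := by rw [mul_comm]; gcongr
    _ ≤ L γ - L v := hLdiff ▸ hγv

/-- key lemma in the two-armed case. Here `x t = q_t(2)`, `l1 t = ℓ̄_t(1)`,
`l2 t = ℓ̄_t(2)`, and `L s = Σ_t ⟨T_s q_t, ℓ̄_t⟩` where `T_s q = (1,0)` if `q(2) ≤ s`
and `T_s q = q` otherwise. -/
theorem two_arm_key_lemma (T : ℕ) (hT : 1 ≤ T) (γ : ℝ)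
    (hγ0 : 0 < γ) (hγ2 : γ ≤ 1 / 2)
    (x l1 l2 : ℕ → ℝ)
    (hx0 : ∀ t < T, 0 ≤ x t) (hx : ∀ t < T, x t ≤ 1 / 2)
    (hl1 : ∀ t < T, l1 t ∈ Set.Icc (0 : ℝ) 1) (hl2 : ∀ t < T, l2 t ∈ Set.Icc (0 : ℝ) 1)
    (hzero : ∀ t < T, x t ≤ γ → l2 t = 0)
    (M m : ℝ) (hM : M = ∑ t ∈ Finset.range T, l1 t) (hm : m = ∑ t ∈ Finset.range T, l2 t)
    (L : ℝ → ℝ)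
    (hL : ∀ s, L s = ∑ t ∈ Finset.range T,
      (if x t ≤ s then 1 * l1 t + 0 * l2 t else (1 - x t) * l1 t + x t * l2 t))
    (hpos : 0 < m - M) :
    ∃ s ∈ Set.Ioc γ (1 / 2 : ℝ), m - M ≤ (L γ - L s) / γ :=
  two_arm_key_lemma_general T γ hγ0 x l1 l2 hx hl1 hzero M m hM hm L hL hpos
end

section
/- Monotonicity preservation under truncation: if q ∈ Δ_K satisfies q(k+1) ≥ q(k+2) ≥ ⋯ ≥ q(K), then for any s ∈ (0,1/2] the truncated vector T^k_s q also satisfies (T^k_s q)(k+1) ≥ (T^k_s q)(k+2) ≥ ⋯ ≥ (T^k_s q)(K), and there exists an index π ∈ {k+1,…,K+1} such that (T^k_s q)(i) = 0 for all i ≥ π and (T^k_s q)(i) = q(i) for all k < i < π. -/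
/-! On the minority coordinates `T^k_s` is the pointwise map `x ↦ if x ≤ s then 0 else x`,
which is monotone for `s ≥ 0`, so it preserves the order. Since `q` is non-increasing there,
the coordinates with `q i ≤ s` form a final segment, which is exactly the part that is zeroed. -/

open Finset

theorem monotone_ite_le_zero {α : Type*} [LinearOrder α] [Zero α] {s : α} (hs : 0 ≤ s) :
    Monotone fun x : α => if x ≤ s then 0 else x := by
  intro x y hxy
  dsimp only
  split_ifs with hx hy hy
  · exact le_rfl
  · exact hs.trans (not_le.mp hy).le
  · exact absurd (hxy.trans hy) hx
  · exact hxy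

theorem trunc_of_le {K k : ℕ} {s : ℝ} {q : Fin K → ℝ} {i : Fin K} (hki : k ≤ (i : ℕ)) :
    trunc K k s q i = if q i ≤ s then 0 else q i := by
  simp only [trunc, if_pos hki]

theorem exists_cutoff_of_upwardClosed {K k : ℕ} (hkK : k ≤ K) (P : Fin K → Prop)
    (hP : ∀ i j : Fin K, k ≤ (i : ℕ) → i ≤ j → P i → P j) :
    ∃ π : ℕ, k ≤ π ∧ π ≤ K ∧ (∀ i : Fin K, π ≤ (i : ℕ) → P i) ∧
      ∀ i : Fin K, k ≤ (i : ℕ) → (i : ℕ) < π → ¬ P i := by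
  classical
  have hex : ∃ n, k ≤ n ∧ ∀ i : Fin K, n ≤ (i : ℕ) → P i :=
    ⟨K, hkK, fun i hi => absurd i.isLt (not_lt.mpr hi)⟩
  obtain ⟨hkπ, hfinal⟩ := Nat.find_spec hex
  refine ⟨Nat.find hex, hkπ, Nat.find_min' hex ⟨hkK, ?_⟩, hfinal, fun i hki hiπ hi => ?_⟩
  · exact fun i hi => absurd i.isLt (not_lt.mpr hi)
  · exact Nat.find_min hex hiπ ⟨hki, fun j hij => hP i j hki (Fin.le_iff_val_le_val.mpr hij) hi⟩

/-- With 0-indexed arms the cutoff `π ∈ {k,…,K}` corresponds to the paper's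
`π ∈ {k+1,…,K+1}`. -/
theorem trunc_preserves_minority_order_general (K k : ℕ) (s : ℝ) (q : Fin K → ℝ)
    (hkK : k ≤ K)
    (hs : 0 < s)
    (hsorted : ∀ i j : Fin K, k ≤ (i : ℕ) → i ≤ j → q j ≤ q i) :
    (∀ i j : Fin K, k ≤ (i : ℕ) → i ≤ j → trunc K k s q j ≤ trunc K k s q i) ∧
    ∃ π : ℕ, k ≤ π ∧ π ≤ K ∧
      (∀ i : Fin K, π ≤ (i : ℕ) → trunc K k s q i = 0) ∧
      (∀ i : Fin K, k ≤ (i : ℕ) → (i : ℕ) < π → trunc K k s q i = q i) := by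
  refine ⟨fun i j hki hij => ?_, ?_⟩
  · rw [trunc_of_le hki, trunc_of_le (hki.trans hij)]
    exact monotone_ite_le_zero hs.le (hsorted i j hki hij)
  · obtain ⟨π, hkπ, hπK, hzeroed, hkept⟩ := exists_cutoff_of_upwardClosed hkK (fun i => q i ≤ s)
      fun i j hki hij hi => (hsorted i j hki hij).trans hi
    refine ⟨π, hkπ, hπK, fun i hπi => ?_, fun i hki hiπ => ?_⟩
    · rw [trunc_of_le (hkπ.trans hπi), if_pos (hzeroed i hπi)]
    · rw [trunc_of_le hki, if_neg (hkept i hki hiπ)]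

/-- truncation preserves the non-increasing order of the minority
coordinates, and acts by zeroing out a final segment of them. (0-indexed arms:
minority arms are `i ≥ k`, and the cutoff `π ∈ {k,…,K}` corresponds to the paper's
`π ∈ {k+1,…,K+1}`.) -/
theorem trunc_preserves_minority_order (K k : ℕ) (s : ℝ) (q : Fin K → ℝ)
    (hK : 1 ≤ K) (hk1 : 1 ≤ k) (hkK : k ≤ K)
    (hs : 0 < s) (hs2 : s ≤ 1 / 2)
    (hq0 : ∀ i, 0 ≤ q i) (hq1 : ∑ i, q i = 1)
    (hmaj : 0 < ∑ j : Fin K, if (j : ℕ) < k then q j else 0)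
    (hsorted : ∀ i j : Fin K, k ≤ (i : ℕ) → i ≤ j → q j ≤ q i) :
    (∀ i j : Fin K, k ≤ (i : ℕ) → i ≤ j → trunc K k s q j ≤ trunc K k s q i) ∧
    ∃ π : ℕ, k ≤ π ∧ π ≤ K ∧
      (∀ i : Fin K, π ≤ (i : ℕ) → trunc K k s q i = 0) ∧
      (∀ i : Fin K, k ≤ (i : ℕ) → (i : ℕ) < π → trunc K k s q i = q i) :=
  trunc_preserves_minority_order_general K k s q hkK hs hsorted
end

section
/- Explicit fixed point formula given a consistent cutoff map: let S ⊂ [0,1/2] be finite, W ∈ Δ_{1+|S|}, ζ ∈ Δ_K with ζ(1) ≥ ⋯ ≥ ζ(K), k ∈ [K], and let π : S → {k+1,…,K+1}. Define q_π(i) = (W(1)/(1 − Σ_{s∈S, π_s>i} W(s)))·ζ(i) for i > k and q_π(i) = (ζ(i)/Σ_{j≤k} ζ(j))·(1 − Σ_{j>k} q_π(j)) for i ≤ k. If for all s ∈ S and all i > k one has q_π(i) > s ⟺ π_s > i, and W(1) > 0 and Σ_{j≤k} ζ(j) > 0, then q_π ∈ Δ_K and q_π = W(1)·ζ + Σ_{s∈S}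 W(s)·T^k_s q_π. -/
/-!
Consistency of the cutoffs says that the thresholds `s` with `i < π s` are exactly those below
`q i`, so `π` can be eliminated: with `σ(x) = weightBelow S W x = ∑_{s ∈ S, s < x} W(s)`, a
minority arm satisfies `q i (1 - σ(q i)) = W(1) ζ i`, and the thresholds that keep arm `i`
contribute `σ(q i) q i` to the mixture, which is the fixed-point equation there. Since
`1 - σ ≥ W(1)`, minority arms have `q i ≤ ζ i`, so the minority mass `m` stays below
`1 - ∑_{j<k} ζ j < 1` and the majority arms carry the positive mass `1 - m`. On a majority arm
the mass removed by `T_s`, averaged over `W`, is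
`∑_{j ≥ k} (∑ W - σ(q j)) q j = W(1) (∑_{j ≥ k} ζ j - m)`, which is exactly what is needed to rescale
`q i` back to itself.
-/

open Finset

/-- The weight of the thresholds that do not truncate an arm of mass `x`. -/
noncomputable def weightBelow (S : Finset ℝ) (w : ℝ → ℝ) (x : ℝ) : ℝ :=
  ∑ s ∈ S, if s < x then w s else 0

lemma weightBelow_le_sum {S : Finset ℝ} {w : ℝ → ℝ} (hw : ∀ s ∈ S, 0 ≤ w s) (x : ℝ) :
    weightBelow S w x ≤ ∑ s ∈ S, w s :=
  sum_le_sum fun s hs => by split_ifs <;> simp [hw s hs]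

lemma sum_ite_lt_add_sum_ite_le {K : ℕ} (k : ℕ) (f : Fin K → ℝ) :
    ((∑ j : Fin K, if (j : ℕ) < k then f j else 0) +
      ∑ j : Fin K, if k ≤ (j : ℕ) then f j else 0) = ∑ j, f j := by
  rw [← sum_add_distrib]
  refine sum_congr rfl fun j _ => ?_
  split_ifs <;> first | omega | ring

section Trunc

variable {K k : ℕ} (S : Finset ℝ) (w : ℝ → ℝ) (q : Fin K → ℝ)

lemma sum_mul_trunc_of_le {i : Fin K} (hi : k ≤ (i : ℕ)) :
    ∑ s ∈ S, w s * trunc K k s q i = weightBelow S w (q i) * q i := by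
  rw [weightBelow, sum_mul]
  refine sum_congr rfl fun s _ => ?_
  simp only [trunc, if_pos hi]
  by_cases h : q i ≤ s
  · simp [h, not_lt.mpr h]
  · simp [h, not_le.mp h]

lemma sum_mul_truncatedMass :
    ∑ s ∈ S, w s * (∑ j : Fin K, if k ≤ (j : ℕ) ∧ q j ≤ s then q j else 0) =
      ∑ j : Fin K, if k ≤ (j : ℕ) then (∑ s ∈ S, w s - weightBelow S w (q j)) * q j else 0 := by
  simp_rw [mul_sum]
  rw [sum_comm]
  refine sum_congr rfl fun j _ => ?_
  split_ifs with hj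
  · rw [weightBelow, ← sum_sub_distrib, sum_mul]
    refine sum_congr rfl fun s _ => ?_
    by_cases h : q j ≤ s
    · simp [hj, h, not_lt.mpr h]
    · simp [h, not_le.mp h]
  · simp [hj]

lemma sum_mul_trunc_of_lt {i : Fin K} (hi : (i : ℕ) < k) :
    ∑ s ∈ S, w s * trunc K k s q i =
      q i * (∑ s ∈ S, w s +
        (∑ j : Fin K, if k ≤ (j : ℕ) then (∑ s ∈ S, w s - weightBelow S w (q j)) * q j else 0) /
          ∑ j : Fin K, if (j : ℕ) < k then q j else 0) := by
  simp only [trunc, if_neg (not_le.mpr hi)]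
  rw [← sum_mul_truncatedMass, sum_div, ← sum_add_distrib, mul_sum]
  refine sum_congr rfl fun s _ => ?_
  ring

end Trunc

lemma nonneg_and_le_of_eq_div_mul {a d z x : ℝ} (ha : 0 < a) (had : a ≤ d) (hz : 0 ≤ z)
    (hx : x = a / d * z) : 0 ≤ x ∧ x ≤ z := by
  have hd : 0 < d := ha.trans_le had
  have hle : a / d ≤ 1 := (div_le_one hd).mpr had
  subst hx
  exact ⟨by positivity, mul_le_of_le_one_left hz hle⟩

section FixedPoint

variable {K k : ℕ} {S : Finset ℝ} {w : ℝ → ℝ} {W1 : ℝ} {ζ q : Fin K → ℝ}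

lemma le_one_sub_weightBelow (hw : ∀ s ∈ S, 0 ≤ w s) (hW : W1 + ∑ s ∈ S, w s = 1) (x : ℝ) :
    W1 ≤ 1 - weightBelow S w x := by
  linarith [weightBelow_le_sum hw x]

lemma sum_ite_le_lt_one (hζ1 : ∑ i, ζ i = 1)
    (hζmaj : 0 < ∑ j : Fin K, if (j : ℕ) < k then ζ j else 0)
    (hqζ : ∀ j : Fin K, k ≤ (j : ℕ) → q j ≤ ζ j) :
    (∑ j : Fin K, if k ≤ (j : ℕ) then q j else 0) < 1 := by
  have hle : (∑ j : Fin K, if k ≤ (j : ℕ) then q j else 0) ≤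
      ∑ j : Fin K, if k ≤ (j : ℕ) then ζ j else 0 :=
    sum_le_sum fun j _ => by split_ifs with hj; exacts [hqζ j hj, le_rfl]
  linarith [sum_ite_lt_add_sum_ite_le k ζ]

lemma sum_ite_lt_eq_of_eq_div_mul {c : ℝ}
    (hζmaj : 0 < ∑ j : Fin K, if (j : ℕ) < k then ζ j else 0)
    (hq : ∀ i : Fin K, (i : ℕ) < k →
      q i = (ζ i / ∑ j : Fin K, if (j : ℕ) < k then ζ j else 0) * c) :
    (∑ j : Fin K, if (j : ℕ) < k then q j else 0) = c := by
  have hterm : ∀ j : Fin K, (if (j : ℕ) < k then q j else 0) =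
      (if (j : ℕ) < k then ζ j else 0) / (∑ j : Fin K, if (j : ℕ) < k then ζ j else 0) * c := by
    intro j
    split_ifs with hj
    exacts [hq j hj, by simp]
  rw [sum_congr rfl fun j _ => hterm j, ← sum_mul, ← sum_div, div_self hζmaj.ne', one_mul]

lemma eq_mixture_of_le {i : Fin K} (hi : k ≤ (i : ℕ))
    (hqi : q i * (1 - weightBelow S w (q i)) = W1 * ζ i) :
    q i = W1 * ζ i + ∑ s ∈ S, w s * trunc K k s q i := by
  rw [sum_mul_trunc_of_le S w q hi]
  linarith

lemma eq_mixture_of_lt {i : Fin K} (hi : (i : ℕ) < k) (hW : W1 + ∑ s ∈ S, w s = 1)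
    (hζ1 : ∑ i, ζ i = 1) (hζmaj : 0 < ∑ j : Fin K, if (j : ℕ) < k then ζ j else 0)
    (hmin : ∀ j : Fin K, k ≤ (j : ℕ) → q j * (1 - weightBelow S w (q j)) = W1 * ζ j)
    (hm : (∑ j : Fin K, if k ≤ (j : ℕ) then q j else 0) < 1)
    (hmaj : (∑ j : Fin K, if (j : ℕ) < k then q j else 0) =
      1 - ∑ j : Fin K, if k ≤ (j : ℕ) then q j else 0)
    (hqi : q i = (ζ i / ∑ j : Fin K, if (j : ℕ) < k then ζ j else 0) *
      (1 - ∑ j : Fin K, if k ≤ (j : ℕ) then q j else 0)) :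
    q i = W1 * ζ i + ∑ s ∈ S, w s * trunc K k s q i := by
  have hwsum : ∑ s ∈ S, w s = 1 - W1 := by linarith
  have hremoved : (∑ j : Fin K,
      if k ≤ (j : ℕ) then (∑ s ∈ S, w s - weightBelow S w (q j)) * q j else 0) =
      W1 * ((∑ j : Fin K, if k ≤ (j : ℕ) then ζ j else 0) -
        ∑ j : Fin K, if k ≤ (j : ℕ) then q j else 0) := by
    rw [mul_sub, mul_sum, mul_sum, ← sum_sub_distrib]
    refine sum_congr rfl fun j _ => ?_
    split_ifs with hj
    · linear_combination hmin j hj + q j * hwsum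
    · ring
  have hminζ : (∑ j : Fin K, if k ≤ (j : ℕ) then ζ j else 0) =
      1 - ∑ j : Fin K, if (j : ℕ) < k then ζ j else 0 := by
    linarith [sum_ite_lt_add_sum_ite_le k ζ]
  have hpos : 0 < 1 - ∑ j : Fin K, if k ≤ (j : ℕ) then q j else 0 := by linarith
  rw [sum_mul_trunc_of_lt S w q hi, hremoved, hmaj, hminζ, hwsum, hqi]
  field_simp
  ring

end FixedPoint

theorem explicit_fixed_point_general (K k : ℕ)
    (S : Finset ℝ)
    (W1 : ℝ) (WS : ℝ → ℝ) (ζ : Fin K → ℝ) (π : ℝ → ℕ) (q : Fin K → ℝ)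
    (hW1 : 0 < W1) (hWS0 : ∀ s ∈ S, 0 ≤ WS s)
    (hWsum : W1 + ∑ s ∈ S, WS s = 1)
    (hζ0 : ∀ i, 0 ≤ ζ i) (hζ1 : ∑ i, ζ i = 1)
    (hζmaj : 0 < ∑ j : Fin K, if (j : ℕ) < k then ζ j else 0)
    (hqmin : ∀ i : Fin K, k ≤ (i : ℕ) →
      q i = W1 / (1 - ∑ s ∈ S, if (i : ℕ) < π s then WS s else 0) * ζ i)
    (hqmaj : ∀ i : Fin K, (i : ℕ) < k →
      q i = (ζ i / ∑ j : Fin K, if (j : ℕ) < k then ζ j else 0) *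
        (1 - ∑ j : Fin K, if k ≤ (j : ℕ) then q j else 0))
    (hcons : ∀ s ∈ S, ∀ i : Fin K, k ≤ (i : ℕ) → (s < q i ↔ (i : ℕ) < π s)) :
    ((∀ i, 0 ≤ q i) ∧ ∑ i, q i = 1) ∧
    ∀ i, q i = W1 * ζ i + ∑ s ∈ S, WS s * trunc K k s q i := by
  have hcut : ∀ i : Fin K, k ≤ (i : ℕ) →
      (∑ s ∈ S, if (i : ℕ) < π s then WS s else 0) = weightBelow S WS (q i) :=
    fun i hi => sum_congr rfl fun s hs => if_congr (hcons s hs i hi).symm rfl rfl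
  have hqmin' : ∀ i : Fin K, k ≤ (i : ℕ) → q i = W1 / (1 - weightBelow S WS (q i)) * ζ i :=
    fun i hi => hcut i hi ▸ hqmin i hi
  have hbelow := le_one_sub_weightBelow hWS0 hWsum
  have hbounds := fun i hi => nonneg_and_le_of_eq_div_mul hW1 (hbelow (q i)) (hζ0 i) (hqmin' i hi)
  have hmin : ∀ i : Fin K, k ≤ (i : ℕ) → q i * (1 - weightBelow S WS (q i)) = W1 * ζ i :=
    fun i hi => by
      nth_rewrite 1 [hqmin' i hi]
      field_simp [(hW1.trans_le (hbelow (q i))).ne']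
  have hm := sum_ite_le_lt_one hζ1 hζmaj fun j hj => (hbounds j hj).2
  have hmaj := sum_ite_lt_eq_of_eq_div_mul hζmaj hqmaj
  refine ⟨⟨fun i => ?_, ?_⟩, fun i => ?_⟩
  · rcases le_or_gt k i with hi | hi
    · exact (hbounds i hi).1
    · rw [hqmaj i hi]
      exact mul_nonneg (div_nonneg (hζ0 i) hζmaj.le) (by linarith)
  · linarith [sum_ite_lt_add_sum_ite_le k q]
  · rcases le_or_gt k i with hi | hi
    · exact eq_mixture_of_le hi (hmin i hi)
    · exact eq_mixture_of_lt hi hWsum hζ1 hζmaj hmin hm hmaj (hqmaj i hi)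

/-- explicit fixed point formula given a consistent cutoff map.
(0-indexed arms; the cutoff `π s ∈ {k,…,K}` corresponds to the paper's
`π_s ∈ {k+1,…,K+1}`, and "`q_π(i) > s ⟺ π_s > i`" becomes `s < q i ↔ i < π s`.) -/
theorem explicit_fixed_point (K k : ℕ)
    (S : Finset ℝ) (hS : ∀ s ∈ S, s ∈ Set.Icc (0 : ℝ) (1 / 2))
    (W1 : ℝ) (WS : ℝ → ℝ) (ζ : Fin K → ℝ) (π : ℝ → ℕ) (q : Fin K → ℝ)
    (hK : 1 ≤ K) (hk1 : 1 ≤ k) (hkK : k ≤ K)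
    (hW1 : 0 < W1) (hWS0 : ∀ s ∈ S, 0 ≤ WS s)
    (hWsum : W1 + ∑ s ∈ S, WS s = 1)
    (hζ0 : ∀ i, 0 ≤ ζ i) (hζ1 : ∑ i, ζ i = 1)
    (hζsorted : ∀ i j : Fin K, i ≤ j → ζ j ≤ ζ i)
    (hζmaj : 0 < ∑ j : Fin K, if (j : ℕ) < k then ζ j else 0)
    (hπ : ∀ s ∈ S, k ≤ π s ∧ π s ≤ K)
    (hqmin : ∀ i : Fin K, k ≤ (i : ℕ) →
      q i = W1 / (1 - ∑ s ∈ S, if (i : ℕ) < π s then WS s else 0) * ζ i)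
    (hqmaj : ∀ i : Fin K, (i : ℕ) < k →
      q i = (ζ i / ∑ j : Fin K, if (j : ℕ) < k then ζ j else 0) *
        (1 - ∑ j : Fin K, if k ≤ (j : ℕ) then q j else 0))
    (hcons : ∀ s ∈ S, ∀ i : Fin K, k ≤ (i : ℕ) → (s < q i ↔ (i : ℕ) < π s)) :
    ((∀ i, 0 ≤ q i) ∧ ∑ i, q i = 1) ∧
    ∀ i, q i = W1 * ζ i + ∑ s ∈ S, WS s * trunc K k s q i :=
  explicit_fixed_point_general K k S W1 WS ζ π q hW1 hWS0 hWsum hζ0 hζ1 hζmaj hqmin hqmaj hcons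
end
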